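/- Let r ≥ 1 be an integer, let α ∈ ℂ with Re α > 0, and let ξ_r := exp(2πi/r). Then for every t > 0, ∑_{m=0}^∞ t^(r·m+α)/Γ(1 + r·m + α) = (1/r)·∑_{k=0}^{r−1} I_α⟨x ↦ exp(ξ_r^k·x)⟩(t). -/

import Mathlib

/-!
Expanding `exp (c x) = ∑ (c x)ⁿ / n!` and integrating term by term (dominated convergence
against the integrable kernel `(t - x)^(α-1)`), the Beta integral
`I_α⟨xⁿ⟩(t) = n! t^(n+α) / Γ(n+1+α)` gives `I_α⟨exp (c ·)⟩(t) = ∑ cⁿ t^(n+α) / Γ(1+n+α)`.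
Averaging over the `r`-th roots of unity `c = ξ^k` kills every term with `r ∤ n` and
multiplies the others by `r`.
-/

/-- Complex power of a real number via the real logarithm:
`s ^ w := exp (w * log s)`. -/
noncomputable def cpowR (s : ℝ) (w : ℂ) : ℂ := Complex.exp (w * Real.log s)

/-- The Riemann–Liouville integral `I_α⟨f⟩(t) = ∫_0^t f x * (t-x)^(α-1)/Γ(α) dx`. -/
noncomputable def RL (α : ℂ) (f : ℝ → ℂ) (t : ℝ) : ℂ :=
  ∫ x in (0:ℝ)..t, f x * cpowR (t - x) (α - 1) / Complex.Gamma α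

open MeasureTheory Set

theorem hasSum_integral_mul_of_norm_le {X E : Type*} [MeasurableSpace X] {μ : Measure X}
    [NormedRing E] [NormedSpace ℝ E] {F : ℕ → X → E} {f g : X → E} (b : ℕ → ℝ)
    (hF : ∀ n, AEStronglyMeasurable (F n) μ) (hFb : ∀ n, ∀ᵐ x ∂μ, ‖F n x‖ ≤ b n)
    (hb : Summable b) (hFf : ∀ᵐ x ∂μ, HasSum (fun n => F n x) (f x)) (hg : Integrable g μ) :
    HasSum (fun n => ∫ x, F n x * g x ∂μ) (∫ x, f x * g x ∂μ) := by
  refine hasSum_integral_of_dominated_convergence (fun n x => b n * ‖g x‖)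
    (fun n => (hF n).mul hg.aestronglyMeasurable) (fun n => ?_)
    (.of_forall fun x => hb.mul_right _) ?_ (hFf.mono fun x hx => hx.mul_right _)
  · filter_upwards [hFb n] with x hx
    exact (norm_mul_le _ _).trans (by gcongr)
  · simp_rw [tsum_mul_right]
    exact hg.norm.const_mul _

theorem cpowR_eq_cpow {s : ℝ} (hs : 0 < s) (w : ℂ) : cpowR s w = (s : ℂ) ^ w := by
  rw [cpowR, Complex.cpow_def_of_ne_zero (by exact_mod_cast hs.ne'),
    ← Complex.ofReal_log hs.le, mul_comm]

theorem eqOn_cpowR_sub {t : ℝ} (ht : 0 ≤ t) (w : ℂ) :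
    EqOn (fun x => cpowR (t - x) w) (fun x : ℝ => ((t : ℂ) - x) ^ w) (uIoo 0 t) := by
  intro x hx
  rw [uIoo_of_le ht] at hx
  simp only [cpowR_eq_cpow (sub_pos.mpr hx.2), Complex.ofReal_sub]

theorem intervalIntegrable_cpowR_sub {α : ℂ} (hα : 0 < α.re) {t : ℝ} (ht : 0 ≤ t) :
    IntervalIntegrable (fun x => cpowR (t - x) (α - 1)) volume 0 t := by
  have h := ((intervalIntegral.intervalIntegrable_cpow' (a := 0) (b := t)
    (r := α - 1) (by simpa using hα)).comp_sub_left t).symm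
  simp only [sub_zero, sub_self] at h
  refine h.congr_uIoo fun x hx => ?_
  simpa using (eqOn_cpowR_sub ht (α - 1) hx).symm

theorem RL_pow {α : ℂ} (hα : 0 < α.re) {t : ℝ} (ht : 0 < t) (n : ℕ) :
    RL α (fun x => (x : ℂ) ^ n) t =
      n.factorial * cpowR t (n + α) / Complex.Gamma (n + 1 + α) := by
  have hn : 0 < ((n : ℂ) + 1).re := by simp; positivity
  have hΓ : Complex.Gamma ((n : ℂ) + 1 + α) ≠ 0 :=
    Complex.Gamma_ne_zero_of_re_pos (by simp; positivity)
  have hbeta := Complex.Gamma_mul_Gamma_eq_betaIntegral hn hα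
  rw [Complex.Gamma_nat_eq_factorial] at hbeta
  have hint := Complex.betaIntegral_scaled ((n : ℂ) + 1) α ht
  rw [add_sub_cancel_right, (by ring : (n : ℂ) + 1 + α - 1 = n + α)] at hint
  simp_rw [Complex.cpow_natCast] at hint
  rw [RL, intervalIntegral.integral_div, intervalIntegral.integral_congr_uIoo, hint]
  · have hΓα : Complex.Gamma α ≠ 0 := Complex.Gamma_ne_zero_of_re_pos hα
    rw [cpowR_eq_cpow ht, div_eq_div_iff hΓα hΓ]
    linear_combination (-(t : ℂ) ^ ((n : ℂ) + α)) * hbeta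
  · exact fun x hx => congrArg (_ * ·) (eqOn_cpowR_sub ht.le _ hx)

theorem hasSum_RL_exp_mul {α : ℂ} (hα : 0 < α.re) {t : ℝ} (ht : 0 < t) (c : ℂ) :
    HasSum (fun n : ℕ => c ^ n / n.factorial * RL α (fun x => (x : ℂ) ^ n) t)
      (RL α (fun x => Complex.exp (c * x)) t) := by
  set g : ℝ → ℂ := fun x => cpowR (t - x) (α - 1) / Complex.Gamma α
  have hRL (f : ℝ → ℂ) : RL α f t = ∫ x in Ioc 0 t, f x * g x := by
    simp only [RL, g, mul_div_assoc, intervalIntegral.integral_of_le ht.le]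
  have hterm (n : ℕ) (x : ℝ) :
      (c * x) ^ n / n.factorial * g x = c ^ n / n.factorial * ((x : ℂ) ^ n * g x) := by
    ring
  simp only [hRL, ← integral_const_mul, ← hterm]
  refine hasSum_integral_mul_of_norm_le (fun n => (‖c‖ * t) ^ n / n.factorial)
    (fun n => by fun_prop) (fun n => ?_) (Real.summable_pow_div_factorial _)
    (.of_forall fun x => ?_) ((intervalIntegrable_cpowR_sub hα ht.le).1.div_const _)
  · filter_upwards [ae_restrict_mem measurableSet_Ioc] with x ⟨hx0, hxt⟩
    rw [norm_div, norm_pow, norm_mul, Complex.norm_real, Complex.norm_natCast,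
      Real.norm_of_nonneg hx0.le]
    gcongr
  · rw [Complex.exp_eq_exp_ℂ]
    exact NormedSpace.expSeries_div_hasSum_exp _

theorem hasSum_ite_dvd_iff {M : Type*} [AddCommMonoid M] [TopologicalSpace M] {r : ℕ}
    (hr : r ≠ 0) {f : ℕ → M} {s : M} :
    HasSum (fun n => if r ∣ n then f n else 0) s ↔ HasSum (fun m => f (r * m)) s := by
  have hinj : Function.Injective (r * ·) := fun _ _ h =>
    Nat.eq_of_mul_eq_mul_left (Nat.pos_of_ne_zero hr) h
  rw [← hinj.hasSum_iff]
  · simp [Function.comp_def]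
  · intro n hn
    rw [if_neg]
    rintro ⟨m, rfl⟩
    exact hn ⟨m, rfl⟩

theorem IsPrimitiveRoot.sum_pow_pow_eq {R : Type*} [CommRing R] [IsDomain R] {ζ : R} {r : ℕ}
    (hζ : IsPrimitiveRoot ζ r) (n : ℕ) :
    ∑ k ∈ Finset.range r, (ζ ^ k) ^ n = if r ∣ n then (r : R) else 0 := by
  simp_rw [← pow_mul, mul_comm _ n, pow_mul]
  split_ifs with h
  · simp [(hζ.pow_eq_one_iff_dvd n).mpr h]
  · have hne : ζ ^ n - 1 ≠ 0 := sub_ne_zero.mpr fun h1 => h ((hζ.pow_eq_one_iff_dvd n).mp h1)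
    have : (∑ k ∈ Finset.range r, (ζ ^ n) ^ k) * (ζ ^ n - 1) = 0 := by
      rw [geom_sum_mul, ← pow_mul, mul_comm, pow_mul, hζ.pow_eq_one, one_pow, sub_self]
    exact (mul_eq_zero.mp this).resolve_right hne

theorem stmt1 (r : ℕ) (hr : 1 ≤ r) (α : ℂ) (hα : 0 < α.re) (t : ℝ) (ht : 0 < t) :
    ∑' m : ℕ, cpowR t ((r : ℂ) * m + α) / Complex.Gamma (1 + (r : ℂ) * m + α)
      = (1 / (r : ℂ)) * ∑ k ∈ Finset.range r,
          RL α (fun x : ℝ =>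
            Complex.exp (Complex.exp (2 * Real.pi * Complex.I / r) ^ k * x)) t := by
  have hr0 : r ≠ 0 := Nat.one_le_iff_ne_zero.mp hr
  set ξ := Complex.exp (2 * Real.pi * Complex.I / r)
  set a : ℕ → ℂ := fun n => cpowR t (n + α) / Complex.Gamma (1 + n + α)
  have hterm (c : ℂ) (n : ℕ) :
      c ^ n / n.factorial * RL α (fun x => (x : ℂ) ^ n) t = c ^ n * a n := by
    rw [RL_pow hα ht, add_comm (n : ℂ) 1]
    have hfac : (n.factorial : ℂ) ≠ 0 := by exact_mod_cast n.factorial_ne_zero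
    simp only [a]
    field_simp
  have hsum : HasSum (fun n => ∑ k ∈ Finset.range r, (ξ ^ k) ^ n * a n)
      (∑ k ∈ Finset.range r, RL α (fun x => Complex.exp (ξ ^ k * x)) t) :=
    hasSum_sum fun k _ => by simpa only [hterm] using hasSum_RL_exp_mul hα ht (ξ ^ k)
  have hsifted : HasSum (fun n => if r ∣ n then a n else 0) ((1 / (r : ℂ)) *
      ∑ k ∈ Finset.range r, RL α (fun x => Complex.exp (ξ ^ k * x)) t) := by
    refine (hsum.mul_left _).congr_fun fun n => ?_
    rw [← Finset.sum_mul, (Complex.isPrimitiveRoot_exp r hr0).sum_pow_pow_eq]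
    split_ifs
    · field_simp
    · simp
  simpa [a] using ((hasSum_ite_dvd_iff hr0).mp hsifted).tsum_eq
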